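/- arXiv:1007.1693 — 4 statements merged into one kernel-verified Lean document; each statement's English description precedes it below -/
import Mathlib

section
/- Let p be an r-component nanophrase of rank n and let q be an r-component nanophrase with more than n semi-letters. Then the pairing ⟨p, q⟩, defined by linearly extending the count of subphrases isomorphic to p via the resolution expansion of semi-letters, equals 0. -/
open List

attribute [local instance] Classical.propDecidable

/-- A symbol in a nanophrase: either a separator `none` or a letter occurrence
`some (x, a)` where `x` is the letter's name and `a` its label in `α`. -/
abbrev NSym (α : Type) := Option (ℕ × α)

/-- A phrase: list of symbols; `none` separates components. -/
abbrev NPhrase (α : Type) := List (NSym α)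

/-- The list of letter occurrences of a phrase. -/
def occs {α : Type} (p : NPhrase α) : List (ℕ × α) := p.filterMap id

/-- The set of (names of) letters appearing in a phrase. -/
def lettersOf {α : Type} (p : NPhrase α) : Finset ℕ := ((occs p).map Prod.fst).toFinset

/-- The rank: number of distinct letters. -/
def rank {α : Type} (p : NPhrase α) : ℕ := (lettersOf p).card

/-- A nanophrase: each letter appears exactly twice, with a consistent label. -/
def IsNano {α : Type} (p : NPhrase α) : Prop :=
  (∀ x ∈ lettersOf p, ((occs p).map Prod.fst).count x = 2) ∧
  (∀ x a b, (x, a) ∈ occs p → (x, b) ∈ occs p → a = b)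

/-- The number of components of a phrase. -/
def comps {α : Type} (p : NPhrase α) : ℕ := p.countP (fun s => s.isNone) + 1

/-- The subphrase with letter set restricted to `T`. -/
def restrict {α : Type} (p : NPhrase α) (T : Finset ℕ) : NPhrase α :=
  p.filter (fun s => match s with | none => true | some (x, _) => decide (x ∈ T))

/-- Isomorphism of (nano)phrases: a renaming of letters preserving labels. -/
def Iso {α : Type} (p q : NPhrase α) : Prop :=
  ∃ σ : ℕ ≃ ℕ, p.map (Option.map (fun xa => (σ xa.1, xa.2))) = q

/-- Angle bracket: the number of subphrases of `p` isomorphic to `q`. -/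
noncomputable def bracketN {α : Type} (q p : NPhrase α) : ℕ :=
  ((lettersOf p).powerset.filter (fun T => Iso (restrict p T) q)).card

/-- Homotopy moves for homotopy data `(α, τ, S)`. -/
inductive HMove {α : Type} (τ : α → α) (S : Set (α × α × α)) : NPhrase α → NPhrase α → Prop
  | h1 (x y : NPhrase α) (i : ℕ) (a : α) :
      HMove τ S (x ++ [some (i,a), some (i,a)] ++ y) (x ++ y)
  | h2 (x y z : NPhrase α) (i j : ℕ) (a b : α) (h : a = τ b) :
      HMove τ S (x ++ [some (i,a), some (j,b)] ++ y ++ [some (j,b), some (i,a)] ++ z)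
        (x ++ y ++ z)
  | h3 (x y z t : NPhrase α) (i j k : ℕ) (a b c : α) (h : (a,b,c) ∈ S) :
      HMove τ S
        (x ++ [some (i,a), some (j,b)] ++ y ++ [some (i,a), some (k,c)] ++ z
           ++ [some (j,b), some (k,c)] ++ t)
        (x ++ [some (j,b), some (i,a)] ++ y ++ [some (k,c), some (i,a)] ++ z
           ++ [some (k,c), some (j,b)] ++ t)

/-- Homotopy: equivalence generated by isomorphism and the moves H1, H2, H3. -/
def Homotopic {α : Type} (τ : α → α) (S : Set (α × α × α)) : NPhrase α → NPhrase α → Prop :=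
  Relation.EqvGen (fun p q => HMove τ S p q ∨ Iso p q)

/-- Build a phrase from a list of components. -/
def ofComponents {α : Type} (L : List (List (ℕ × α))) : NPhrase α :=
  ((L.map (fun c => c.map some)).intersperse [none]).flatten

lemma occs_restrict {α : Type} (q : NPhrase α) (S : Finset ℕ) :
    occs (restrict q S) = (occs q).filter (fun xa => decide (xa.1 ∈ S)) := by
  induction q with
  | nil => rfl
  | cons s l ih =>
    cases s with
    | none => simpa [occs, restrict, List.filter_cons, List.filterMap_cons] using ih
    | some xa =>
      by_cases h : xa.1 ∈ S <;>
        simp_all [occs, restrict, List.filter_cons, List.filterMap_cons]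

lemma lettersOf_restrict {α : Type} (q : NPhrase α) (S : Finset ℕ) :
    lettersOf (restrict q S) = lettersOf q ∩ S := by
  ext x
  simp [lettersOf, occs_restrict, List.mem_filter]

lemma restrict_restrict {α : Type} (q : NPhrase α) {S T : Finset ℕ} (h : T ⊆ S) :
    restrict (restrict q S) T = restrict q T := by
  unfold restrict
  rw [List.filter_filter]
  apply List.filter_congr
  intro s _
  cases s with
  | none => simp
  | some xa =>
    obtain ⟨x, a⟩ := xa
    by_cases hx : x ∈ T <;> simp [hx]
    exact h hx

lemma Iso.rank_eq {α : Type} {a b : NPhrase α} (h : Iso a b) : rank a = rank b := by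
  obtain ⟨σ, hσ⟩ := h
  have hocc : occs b = (occs a).map (fun xa => (σ xa.1, xa.2)) := by
    rw [← hσ]
    unfold occs
    rw [List.filterMap_map, List.map_filterMap]
    rfl
  have hlet : lettersOf b = (lettersOf a).image σ := by
    ext x
    simp [lettersOf, hocc]
  rw [rank, rank, hlet, Finset.card_image_of_injective _ σ.injective]

lemma neg_one_pow_sub (a b : ℕ) (h : b ≤ a) : (-1:ℤ)^(a-b) = (-1)^a * (-1)^b := by
  have h2 : (-1:ℤ)^(a-b) * (-1)^b = (-1)^a := by rw [← pow_add, Nat.sub_add_cancel h]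
  have h3 : ((-1:ℤ)^b) * ((-1)^b) = 1 := by
    rw [← pow_add, ← two_mul]; exact Even.neg_one_pow ⟨b, two_mul b ▸ rfl⟩
  calc (-1:ℤ)^(a-b) = (-1)^(a-b) * ((-1)^b * (-1)^b) := by rw [h3, mul_one]
    _ = ((-1)^(a-b) * (-1)^b) * (-1)^b := by ring
    _ = (-1)^a * (-1)^b := by rw [h2]

private theorem bracket_vanishes_aux {α : Type} (n : ℕ)
    (p q : NPhrase α)
    (hrank : rank p = n)
    (D : Finset ℕ) (hD : D ⊆ lettersOf q) (hcard : n < D.card) :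
    ∑ E ∈ D.powerset, (-1 : ℤ) ^ (D.card - E.card) *
        (bracketN p (restrict q ((lettersOf q \ D) ∪ E)) : ℤ) = 0 := by
  classical
  set L := lettersOf q with hLdef
  -- Step A: rewrite each bracket as a sum over T ⊆ L
  have hA : ∀ E ∈ D.powerset,
      (bracketN p (restrict q ((L \ D) ∪ E)) : ℤ)
      = ∑ T ∈ L.powerset,
          (if T ∩ D ⊆ E ∧ Iso (restrict q T) p then (1:ℤ) else 0) := by
    intro E hE
    rw [Finset.mem_powerset] at hE
    have hEL : E ⊆ L := hE.trans hD
    have hSL : (L \ D) ∪ E ⊆ L := Finset.union_subset Finset.sdiff_subset hEL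
    have hset : lettersOf (restrict q ((L \ D) ∪ E)) = (L \ D) ∪ E := by
      rw [lettersOf_restrict, ← hLdef, Finset.inter_eq_right.mpr hSL]
    have hcardeq : bracketN p (restrict q ((L \ D) ∪ E))
        = (L.powerset.filter (fun T => T ∩ D ⊆ E ∧ Iso (restrict q T) p)).card := by
      unfold bracketN
      congr 1
      apply Finset.ext
      intro T
      simp only [Finset.mem_filter, Finset.mem_powerset, hset]
      constructor
      · rintro ⟨hT, hiso⟩
        have hTL : T ⊆ L := hT.trans hSL
        refine ⟨hTL, ?_, by rwa [restrict_restrict q hT] at hiso⟩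
        intro x hx
        rcases Finset.mem_inter.mp hx with ⟨hxT, hxD⟩
        rcases Finset.mem_union.mp (hT hxT) with h | h
        · exact absurd hxD (Finset.mem_sdiff.mp h).2
        · exact h
      · rintro ⟨hTL, hTD, hiso⟩
        have hTS : T ⊆ (L \ D) ∪ E := by
          intro x hx
          by_cases hxD : x ∈ D
          · exact Finset.mem_union_right _ (hTD (Finset.mem_inter.mpr ⟨hx, hxD⟩))
          · exact Finset.mem_union_left _ (Finset.mem_sdiff.mpr ⟨hTL hx, hxD⟩)
        exact ⟨hTS, by rwa [restrict_restrict q hTS]⟩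
    rw [hcardeq, Finset.card_filter]
    push_cast
    rfl
  calc ∑ E ∈ D.powerset, (-1 : ℤ) ^ (D.card - E.card) *
        (bracketN p (restrict q ((L \ D) ∪ E)) : ℤ)
      = ∑ E ∈ D.powerset, ∑ T ∈ L.powerset, (-1 : ℤ) ^ (D.card - E.card) *
          (if T ∩ D ⊆ E ∧ Iso (restrict q T) p then (1:ℤ) else 0) := by
        refine Finset.sum_congr rfl (fun E hE => ?_)
        rw [hA E hE, Finset.mul_sum]
    _ = ∑ T ∈ L.powerset, ∑ E ∈ D.powerset, (-1 : ℤ) ^ (D.card - E.card) *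
          (if T ∩ D ⊆ E ∧ Iso (restrict q T) p then (1:ℤ) else 0) := Finset.sum_comm
    _ = 0 := by
        refine Finset.sum_eq_zero (fun T hT => ?_)
        rw [Finset.mem_powerset] at hT
        by_cases hiso : Iso (restrict q T) p
        · -- T has exactly n letters
          have hTcard : T.card = n := by
            have h1 : rank (restrict q T) = rank p := hiso.rank_eq
            have h2 : rank (restrict q T) = T.card := by
              rw [rank, lettersOf_restrict, ← hLdef, Finset.inter_eq_right.mpr hT]
            omega
          set A := T ∩ D with hAdef
          have hAD : A ⊆ D := Finset.inter_subset_right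
          have hne : (D \ A).Nonempty := by
            rw [Finset.sdiff_nonempty]
            intro hDA
            have h3 := Finset.card_le_card hDA
            have h4 : A.card ≤ T.card := Finset.card_le_card Finset.inter_subset_left
            omega
          have hstep : ∀ E ∈ D.powerset, (-1 : ℤ) ^ (D.card - E.card) *
              (if T ∩ D ⊆ E ∧ Iso (restrict q T) p then (1:ℤ) else 0)
              = if A ⊆ E then (-1 : ℤ) ^ (D.card - E.card) else 0 := by
            intro E _
            by_cases hAE : A ⊆ E <;> simp [hAdef, hAE, hiso]
          rw [Finset.sum_congr rfl hstep, ← Finset.sum_filter]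
          have hdisj : ∀ F : Finset ℕ, F ⊆ D \ A → Disjoint F A := fun F hF =>
            Finset.sdiff_disjoint.mono_left hF
          have himg : D.powerset.filter (fun E => A ⊆ E)
              = (D \ A).powerset.image (fun F => F ∪ A) := by
            ext E
            simp only [Finset.mem_filter, Finset.mem_powerset, Finset.mem_image]
            constructor
            · rintro ⟨hED, hAE⟩
              exact ⟨E \ A, Finset.sdiff_subset_sdiff hED (le_refl A),
                Finset.sdiff_union_of_subset hAE⟩
            · rintro ⟨F, hF, rfl⟩
              exact ⟨Finset.union_subset (hF.trans Finset.sdiff_subset) hAD,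
                Finset.subset_union_right⟩
          have hinj : ∀ F1 ∈ (D \ A).powerset, ∀ F2 ∈ (D \ A).powerset,
              F1 ∪ A = F2 ∪ A → F1 = F2 := by
            intro F1 h1 F2 h2 heq
            rw [Finset.mem_powerset] at h1 h2
            have e1 := Finset.union_sdiff_cancel_right (hdisj F1 h1)
            have e2 := Finset.union_sdiff_cancel_right (hdisj F2 h2)
            rw [← e1, ← e2, heq]
          rw [himg, Finset.sum_image hinj]
          have hcards : (D \ A).card + A.card = D.card :=
            Finset.card_sdiff_add_card_eq_card hAD
          have hterm : ∀ F ∈ (D \ A).powerset,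
              (-1:ℤ) ^ (D.card - (F ∪ A).card) = (-1)^((D \ A).card) * (-1)^F.card := by
            intro F hF
            rw [Finset.mem_powerset] at hF
            rw [Finset.card_union_of_disjoint (hdisj F hF)]
            have hle : F.card ≤ (D \ A).card := Finset.card_le_card hF
            have heq2 : D.card - (F.card + A.card) = (D \ A).card - F.card := by omega
            rw [heq2, neg_one_pow_sub _ _ hle]
          rw [Finset.sum_congr rfl hterm, ← Finset.mul_sum,
            Finset.sum_powerset_neg_one_pow_card_of_nonempty hne, mul_zero]
        · refine Finset.sum_eq_zero (fun E _ => ?_)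
          simp [hiso]

/-- let `p` be an `r`-component nanophrase of rank `n` and `q` an
`r`-component nanophrase with more than `n` semi-letters (the set `D` of marked
letters of `q`).  Expanding each semi-letter as (letter) − (deleted), i.e. summing
over all resolutions `E ⊆ D` with sign `(-1)^(|D| - |E|)`, the pairing `⟨p, q⟩`
vanishes. -/
theorem bracket_vanishes_on_many_semiletters {α : Type} (r n : ℕ)
    (p q : NPhrase α) (hp : IsNano p) (hq : IsNano q)
    (hpr : comps p = r) (hqr : comps q = r)
    (hrank : rank p = n)
    (D : Finset ℕ) (hD : D ⊆ lettersOf q) (hcard : n < D.card) :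
    ∑ E ∈ D.powerset, (-1 : ℤ) ^ (D.card - E.card) *
        (bracketN p (restrict q ((lettersOf q \ D) ∪ E)) : ℤ) = 0 :=
  bracket_vanishes_aux n p q hrank D hD hcard
end

section
/- Every finite type invariant of degree 0 for any homotopy of r-component nanophrases is constant: u(p) = u(trivial r-component nanophrase) for every r-component nanophrase p. -/
open List

attribute [local instance] Classical.propDecidable

section Aux

variable {α : Type}

/-- The list of letter names of a phrase. -/
def nms (p : NPhrase α) : List ℕ := (occs p).map Prod.fst

@[simp] lemma occs_append (p q : NPhrase α) : occs (p ++ q) = occs p ++ occs q := by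
  simp [occs]

@[simp] lemma nms_append (p q : NPhrase α) : nms (p ++ q) = nms p ++ nms q := by
  simp [nms]

@[simp] lemma occs_some (i : ℕ) (a : α) : occs ([some (i,a)] : NPhrase α) = [(i,a)] := rfl

@[simp] lemma nms_some (i : ℕ) (a : α) : nms ([some (i,a)] : NPhrase α) = [i] := rfl

lemma mem_lettersOf {p : NPhrase α} {i : ℕ} : i ∈ lettersOf p ↔ i ∈ nms p := by
  simp [lettersOf, nms]

lemma exists_mem_of_mem_nms {q : NPhrase α} {i : ℕ} (h : i ∈ nms q) :
    ∃ b, some (i, b) ∈ q := by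
  obtain ⟨⟨j, b⟩, hm, hj⟩ := List.mem_map.1 h
  cases hj
  obtain ⟨s, hs, hid⟩ := List.mem_filterMap.1 hm
  exact ⟨b, by simpa [show s = some (j, b) from hid] using hs⟩

lemma mem_occs_of_mem {q : NPhrase α} {i : ℕ} {b : α} (h : some (i, b) ∈ q) :
    (i, b) ∈ occs q :=
  List.mem_filterMap.2 ⟨some (i, b), h, rfl⟩

/-- Decomposition of a nanophrase at a letter. -/
lemma decomp {p : NPhrase α} (hp : IsNano p) {i : ℕ} (hi : i ∈ lettersOf p) :
    ∃ x y z a, p = x ++ [some (i, a)] ++ y ++ [some (i, a)] ++ z := by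
  obtain ⟨hcnt, hlab⟩ := hp
  have h2 := hcnt i hi
  rw [mem_lettersOf] at hi
  obtain ⟨a, ha⟩ := exists_mem_of_mem_nms hi
  obtain ⟨s, t, rfl⟩ := List.append_of_mem ha
  have hp' : s ++ some (i, a) :: t = s ++ [some (i, a)] ++ t := by simp
  rw [hp'] at h2 ⊢
  have h2' : (nms (s ++ [some (i, a)] ++ t)).count i = 2 := h2
  simp only [nms_append, nms_some, List.count_append, List.count_singleton, beq_self_eq_true, if_true] at h2'
  rcases Nat.eq_zero_or_pos ((nms s).count i) with hs0 | hspos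
  · have ht1 : 0 < (nms t).count i := by omega
    obtain ⟨b, hb⟩ := exists_mem_of_mem_nms (List.count_pos_iff.1 ht1)
    obtain ⟨t1, t2, rfl⟩ := List.append_of_mem hb
    have hab : b = a := hlab i b a
      (mem_occs_of_mem (by simp))
      (mem_occs_of_mem (by simp))
    subst hab
    exact ⟨s, t1, t2, b, by simp⟩
  · obtain ⟨b, hb⟩ := exists_mem_of_mem_nms (List.count_pos_iff.1 hspos)
    obtain ⟨s1, s2, rfl⟩ := List.append_of_mem hb
    have hab : b = a := hlab i b a
      (mem_occs_of_mem (by simp))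
      (mem_occs_of_mem (by simp))
    subst hab
    exact ⟨s1, s2, t, b, by simp⟩

lemma comps_remove (x y z : NPhrase α) (i : ℕ) (a : α) :
    comps (x ++ [some (i, a)] ++ y ++ [some (i, a)] ++ z) = comps (x ++ y ++ z) := by
  unfold comps
  simp [List.countP_append]

lemma nano_remove {x y z : NPhrase α} {i : ℕ} {a : α}
    (hp : IsNano (x ++ [some (i, a)] ++ y ++ [some (i, a)] ++ z)) :
    IsNano (x ++ y ++ z) ∧ i ∉ lettersOf (x ++ y ++ z) ∧
      lettersOf (x ++ y ++ z) ⊆ lettersOf (x ++ [some (i, a)] ++ y ++ [some (i, a)] ++ z) := by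
  obtain ⟨hcnt, hlab⟩ := hp
  have key : ∀ j : ℕ,
      (nms (x ++ [some (i, a)] ++ y ++ [some (i, a)] ++ z)).count j =
        (nms (x ++ y ++ z)).count j + (if j = i then 2 else 0) := by
    intro j
    simp only [nms_append, nms_some, List.count_append, List.count_singleton]
    rcases eq_or_ne i j with h | h
    · subst h; simp; omega
    · simp [h, Ne.symm h]
  have hmemocc : ∀ j b, (j, b) ∈ occs (x ++ y ++ z) →
      (j, b) ∈ occs (x ++ [some (i, a)] ++ y ++ [some (i, a)] ++ z) := by
    intro j b h
    simp only [occs_append, List.mem_append] at h ⊢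
    tauto
  have hsub : lettersOf (x ++ y ++ z) ⊆
      lettersOf (x ++ [some (i, a)] ++ y ++ [some (i, a)] ++ z) := by
    intro j hj
    rw [mem_lettersOf] at hj ⊢
    have : 0 < (nms (x ++ y ++ z)).count j := List.count_pos_iff.2 hj
    have := key j
    refine List.count_pos_iff.1 ?_
    omega
  have hnotin : i ∉ lettersOf (x ++ y ++ z) := by
    intro hin
    have h1 : 0 < (nms (x ++ y ++ z)).count i :=
      List.count_pos_iff.2 (mem_lettersOf.1 hin)
    have h2 : (nms (x ++ [some (i, a)] ++ y ++ [some (i, a)] ++ z)).count i = 2 :=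
      hcnt i (hsub hin)
    have h3 := key i
    rw [if_pos rfl] at h3
    omega
  refine ⟨⟨?_, fun j b c hb hc => hlab j b c (hmemocc j b hb) (hmemocc j c hc)⟩, hnotin, hsub⟩
  intro j hj
  have hji : j ≠ i := fun h => hnotin (h ▸ hj)
  have h2 : (nms (x ++ [some (i, a)] ++ y ++ [some (i, a)] ++ z)).count j = 2 :=
    hcnt j (hsub hj)
  have h3 := key j
  rw [if_neg hji] at h3
  show (nms (x ++ y ++ z)).count j = 2
  omega

lemma rank_lt {x y z : NPhrase α} {i : ℕ} {a : α}
    (hp : IsNano (x ++ [some (i, a)] ++ y ++ [some (i, a)] ++ z)) :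
    rank (x ++ y ++ z) < rank (x ++ [some (i, a)] ++ y ++ [some (i, a)] ++ z) := by
  obtain ⟨_, hnotin, hsub⟩ := nano_remove hp
  refine Finset.card_lt_card (Finset.ssubset_iff_subset_ne.2 ⟨hsub, fun h => ?_⟩)
  rw [h] at hnotin
  exact hnotin (mem_lettersOf.2 (by simp [nms, occs]))

end Aux

/-- every finite type invariant of degree 0 for any homotopy of
`r`-component nanophrases is constant.  Here `v` (valued in an abelian group `G`)
is a homotopy invariant whose linear extension vanishes on every nanophrase with at
least one semi-letter, i.e. `v (x A y A z) = v (x y z)` for every nanophrase of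
that form.  The trivial `r`-component nanophrase is `r` empty components. -/
theorem degree_zero_invariant_is_constant {α : Type} {G : Type} [AddCommGroup G]
    (τ : α → α) (hτ : Function.Involutive τ) (S : Set (α × α × α)) (r : ℕ) (hr : 1 ≤ r)
    (v : NPhrase α → G)
    (hinv : ∀ p q, IsNano p → IsNano q → comps p = r → comps q = r →
      Homotopic τ S p q → v p = v q)
    (hdeg0 : ∀ (x y z : NPhrase α) (i : ℕ) (a : α),
      IsNano (x ++ [some (i,a)] ++ y ++ [some (i,a)] ++ z) →
      comps (x ++ [some (i,a)] ++ y ++ [some (i,a)] ++ z) = r →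
      v (x ++ [some (i,a)] ++ y ++ [some (i,a)] ++ z) = v (x ++ y ++ z)) :
    ∀ p : NPhrase α, IsNano p → comps p = r →
      v p = v (List.replicate (r - 1) (none : NSym α)) := by
  intro p hp hc
  generalize hn : rank p = n
  induction n using Nat.strong_induction_on generalizing p with
  | _ n ih =>
    rcases Nat.eq_zero_or_pos n with h0 | hpos
    · -- no letters: p is all separators
      subst h0
      have hempty : lettersOf p = ∅ := Finset.card_eq_zero.1 hn
      have hall : ∀ s ∈ p, s = (none : NSym α) := by
        intro s hs
        cases s with
        | none => rfl
        | some v =>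
          exfalso
          have hv : v.1 ∈ lettersOf p :=
            mem_lettersOf.2 (List.mem_map.2 ⟨v, mem_occs_of_mem hs, rfl⟩)
          rw [hempty] at hv
          exact absurd hv (Finset.notMem_empty _)
      have hrep : p = List.replicate p.length (none : NSym α) :=
        List.eq_replicate_of_mem hall
      have hlen : p.length = r - 1 := by
        have hcp : p.countP (fun s => s.isNone) = p.length :=
          List.countP_eq_length.2 (fun s hs => by rw [hall s hs]; rfl)
        simp only [comps, hcp] at hc
        omega
      rw [hrep, hlen]
    · have hne : (lettersOf p).Nonempty := Finset.card_pos.1 (by unfold rank at hn; omega)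
      obtain ⟨i, hi⟩ := hne
      obtain ⟨x, y, z, a, rfl⟩ := decomp hp hi
      obtain ⟨hq, _, _⟩ := nano_remove hp
      have hcq : comps (x ++ y ++ z) = r := by rw [← comps_remove x y z i a]; exact hc
      have hrank : rank (x ++ y ++ z) < n := by rw [← hn]; exact rank_lt hp
      rw [hdeg0 x y z i a hp hc]
      exact ih _ hrank _ hq hcq rfl
end

section
/- The linking matrix of nanophrases is a finite type invariant of degree 1: for any nanophrase p with two semi-letters Ȧ, Ḃ, the alternating sum L(p_{AB}) − L(p_A) − L(p_B) + L(p_∅) is the zero matrix, where the four terms keep/delete A and B respectively. -/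
open List

attribute [local instance] Classical.propDecidable

variable {α : Type}

/-- The group π: generated by α with relations a + τ(a) = 0. -/
def piRel (τ : α → α) : AddSubgroup (FreeAbelianGroup α) :=
  AddSubgroup.closure {g | ∃ a, g = FreeAbelianGroup.of a + FreeAbelianGroup.of (τ a)}

abbrev PiGrp (τ : α → α) := FreeAbelianGroup α ⧸ piRel τ

/-- The image of a label `a : α` in π. -/
def piMk (τ : α → α) (a : α) : PiGrp τ :=
  QuotientAddGroup.mk' (piRel τ) (FreeAbelianGroup.of a)

/-- Annotate each letter occurrence with the index of its component. -/
def ann : ℕ → NPhrase α → List (ℕ × ℕ × α)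
  | _, [] => []
  | c, (none :: rest) => ann (c + 1) rest
  | c, (some (x, a) :: rest) => (c, x, a) :: ann c rest

/-- The `(i,j)` entry of the linking matrix: `0` on the diagonal, and otherwise the
sum in π of the labels of the letters having one occurrence in component `i` and
the other in component `j`. -/
noncomputable def lij (τ : α → α) (p : NPhrase α) (i j : ℕ) : PiGrp τ :=
  ((ann 0 p).map (fun e =>
    if i ≠ j ∧ e.1 = i ∧ (j, e.2.1, e.2.2) ∈ ann 0 p then piMk τ e.2.2 else 0)).sum

/-! Each entry of the linking matrix is a sum over letter occurrences, and the summand at an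
occurrence of a kept letter does not change under restriction, since the letter's other
occurrence is kept too. So `L(p_T)` is that sum over the occurrences of letters in `T`, and
the alternating sum vanishes occurrence by occurrence, by inclusion–exclusion for the two
deleted letters. -/

noncomputable def linkTerm (τ : α → α) (l : List (ℕ × ℕ × α)) (i j : ℕ) (e : ℕ × ℕ × α) :
    PiGrp τ :=
  if i ≠ j ∧ e.1 = i ∧ (j, e.2.1, e.2.2) ∈ l then piMk τ e.2.2 else 0

lemma lij_eq_sum_linkTerm (τ : α → α) (p : NPhrase α) (i j : ℕ) :
    lij τ p i j = ((ann 0 p).map (linkTerm τ (ann 0 p) i j)).sum :=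
  rfl

lemma ann_restrict (T : Finset ℕ) : ∀ (c : ℕ) (p : NPhrase α),
    ann c (restrict p T) = (ann c p).filter (fun e => e.2.1 ∈ T)
  | _, [] => rfl
  | c, none :: rest => by
      simpa [ann, restrict] using ann_restrict T (c + 1) rest
  | c, some (x, a) :: rest => by
      have ih := ann_restrict T c rest
      simp only [restrict] at ih ⊢
      by_cases hx : x ∈ T <;> simp [ann, hx, ih]

lemma map_snd_ann : ∀ (c : ℕ) (p : NPhrase α), (ann c p).map Prod.snd = occs p
  | _, [] => rfl
  | c, none :: rest => by simp [ann, occs, map_snd_ann (c + 1) rest]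
  | c, some (x, a) :: rest => by simp [ann, occs, map_snd_ann c rest]

lemma mem_lettersOf_of_mem_ann {c : ℕ} {p : NPhrase α} {e : ℕ × ℕ × α} (he : e ∈ ann c p) :
    e.2.1 ∈ lettersOf p := by
  have hocc : e.2 ∈ occs p := map_snd_ann c p ▸ List.mem_map_of_mem he
  simpa [lettersOf] using ⟨e.2.2, hocc⟩

lemma linkTerm_filter (τ : α → α) (l : List (ℕ × ℕ × α)) (T : Finset ℕ) (i j : ℕ)
    {e : ℕ × ℕ × α} (he : e.2.1 ∈ T) :
    linkTerm τ (l.filter (fun e => e.2.1 ∈ T)) i j e = linkTerm τ l i j e := by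
  simp [linkTerm, he]

lemma lij_restrict (τ : α → α) (p : NPhrase α) (T : Finset ℕ) (i j : ℕ) :
    lij τ (restrict p T) i j
      = (((ann 0 p).filter (fun e => e.2.1 ∈ T)).map (linkTerm τ (ann 0 p) i j)).sum := by
  rw [lij_eq_sum_linkTerm, ann_restrict]
  congr 1
  refine List.map_congr_left fun e he => linkTerm_filter τ _ T i j ?_
  simpa using (List.mem_filter.1 he).2

lemma sum_map_sub_filter_sdiff {β γ G : Type*} [DecidableEq γ] [AddCommGroup G]
    (l : List β) (k : β → γ) (f : β → G) {L : Finset γ} (hL : ∀ b ∈ l, k b ∈ L)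
    {u v : γ} (huv : u ≠ v) :
    (l.map f).sum - ((l.filter (fun b => k b ∈ L \ {v})).map f).sum
      - ((l.filter (fun b => k b ∈ L \ {u})).map f).sum
      + ((l.filter (fun b => k b ∈ L \ {u, v})).map f).sum = 0 := by
  induction l with
  | nil => simp
  | cons b l ih =>
    have hb := hL b (List.mem_cons_self ..)
    specialize ih fun b hb => hL b (List.mem_cons_of_mem _ hb)
    rw [← ih]
    by_cases hu : k b = u
    · simp [hu ▸ hb, hu, huv]
    by_cases hv : k b = v
    · simp [hv ▸ hb, hv, huv.symm]
      abel
    simp [hb, hu, hv]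
    abel

theorem linking_matrix_degree_one_general (τ : α → α)
    (p : NPhrase α)
    (u v : ℕ) (huv : u ≠ v) :
    ∀ i j : ℕ,
      lij τ p i j
        - lij τ (restrict p (lettersOf p \ {v})) i j
        - lij τ (restrict p (lettersOf p \ {u})) i j
        + lij τ (restrict p (lettersOf p \ {u, v})) i j = 0 := by
  intro i j
  rw [lij_eq_sum_linkTerm, lij_restrict, lij_restrict, lij_restrict]
  exact sum_map_sub_filter_sdiff _ _ _ (fun _ => mem_lettersOf_of_mem_ann) huv

/-- the linking matrix is a finite type invariant of degree 1: for any
nanophrase `p` with two semi-letters `u ≠ v`, the alternating sum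
`L(p_{uv}) − L(p_u) − L(p_v) + L(p_∅)` (keeping/deleting `u` and `v`) is the zero
matrix. -/
theorem linking_matrix_degree_one (τ : α → α) (hτ : Function.Involutive τ)
    (p : NPhrase α) (hp : IsNano p)
    (u v : ℕ) (hu : u ∈ lettersOf p) (hv : v ∈ lettersOf p) (huv : u ≠ v) :
    ∀ i j : ℕ,
      lij τ p i j
        - lij τ (restrict p (lettersOf p \ {v})) i j
        - lij τ (restrict p (lettersOf p \ {u})) i j
        + lij τ (restrict p (lettersOf p \ {u, v})) i j = 0 :=
  linking_matrix_degree_one_general τ p u v huv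
end

section
/- Fix homotopy data (α,τ,S), an orientation α_o of α, and a ∈ α_o with a ≠ τ(a); write b = τ(a). For any r-component nanophrase p and components i < j, writing k = ⟨g_{i,j,a}, p⟩ and l = ⟨g_{i,j,b}, p⟩, the identities ⟨e_{i,j,a,a} + f_{i,j,a,a}, p⟩ = k(k−1)/2 and ⟨e_{i,j,b,b} + f_{i,j,b,b}, p⟩ = l(l−1)/2 and ⟨e_{i,j,a,b} + f_{i,j,a,b} + e_{i,j,b,a} + f_{i,j,b,a}, p⟩ = kl hold; consequently the degree-2 angle bracket formula ⟨2e_{i,j,a,a}+2f_{i,j,a,a}−2e_{i,j,a,b}−2f_{i,j,a,b}−2e_{i,j,b,a}−2f_{i,j,b,a}+2e_{i,j,b,b}+2f_{i,j,b,b}+g_{i,j,a}+g_{i,j,b}, p⟩ equals (k − l)², the square of the (a-component of the) linking number. -/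
open List

attribute [local instance] Classical.propDecidable

/-- `g_{i,j,a}`: a single letter with one occurrence in component `i` and one in
component `j` (`i < j`), labeled `a`. -/
def gPat {α : Type} (r : ℕ) (i j : Fin r) (a : α) : NPhrase α :=
  ofComponents (List.ofFn fun k : Fin r => if k = i ∨ k = j then [(0,a)] else [])

/-- `e_{i,j,a,b}`: component `i` is `AB` and component `j` is `AB`, `|A|=a`, `|B|=b`. -/
def ePat {α : Type} (r : ℕ) (i j : Fin r) (a b : α) : NPhrase α :=
  ofComponents (List.ofFn fun k : Fin r =>
    if k = i then [(0,a),(1,b)] else if k = j then [(0,a),(1,b)] else [])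

/-- `f_{i,j,a,b}`: component `i` is `AB` and component `j` is `BA`, `|A|=a`, `|B|=b`. -/
def fPat {α : Type} (r : ℕ) (i j : Fin r) (a b : α) : NPhrase α :=
  ofComponents (List.ofFn fun k : Fin r =>
    if k = i then [(0,a),(1,b)] else if k = j then [(1,b),(0,a)] else [])

/-
Write `p` through its components `D k`. Call `x` a linking letter of label `c` if it occurs exactly
once in component `i`, once in component `j`, nowhere else, and is labelled `c`. A subphrase on the
letter set `T` is isomorphic to `g_{i,j,c}` exactly when `T = {x}` with `x` linking of label `c`,
and to `e_{i,j,c,d}` or `f_{i,j,c,d}` exactly when `T = {x, y}` with `x`, `y` linking of labels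
`c`, `d` and `x` before `y` in component `i`; the order in component `j` decides between `e` and
`f`. So `⟨e_{i,j,c,d} + f_{i,j,c,d}, p⟩` counts pairs of linking letters ordered as in component
`i`, and every pair of distinct linking letters is met in exactly one of its two orders. This gives
`k(k-1)/2` and `kl`, and the last identity is algebra.
-/

namespace Nanophrase

variable {α : Type}

theorem ofComponents_eq_intercalate (L : List (List (ℕ × α))) :
    ofComponents L = [none].intercalate (L.map (List.map some)) := rfl

theorem ofComponents_singleton (c : List (ℕ × α)) : ofComponents [c] = c.map some := by
  simp [ofComponents_eq_intercalate]

theorem ofComponents_cons (c : List (ℕ × α)) {L : List (List (ℕ × α))} (hL : L ≠ []) :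
    ofComponents (c :: L) = c.map some ++ none :: ofComponents L := by
  simp [ofComponents_eq_intercalate, List.intercalate_cons_of_ne_nil, hL]

theorem ofComponents_injOn : Set.InjOn (ofComponents (α := α)) {L | L ≠ []} := by
  intro L hL L' hL' h
  have hsep : ∀ M : List (List (ℕ × α)), ∀ l ∈ M.map (List.map some), none ∉ l := by
    simp
  rw [ofComponents_eq_intercalate, ofComponents_eq_intercalate] at h
  have := congrArg (List.splitOn none) h
  rw [List.splitOn_intercalate _ (hsep L) (by simpa using hL),
    List.splitOn_intercalate _ (hsep L') (by simpa using hL')] at this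
  exact List.map_injective_iff.mpr (List.map_injective_iff.mpr (Option.some_injective _))
    this

theorem restrict_ofComponents (L : List (List (ℕ × α))) (T : Finset ℕ) :
    restrict (ofComponents L) T = ofComponents (L.map (List.filter fun xa => xa.1 ∈ T)) := by
  induction L with
  | nil => rfl
  | cons c L ih =>
    rcases eq_or_ne L [] with rfl | hL
    · simp [ofComponents_singleton, restrict, List.filter_map, Function.comp_def]
    · rw [ofComponents_cons c hL, List.map_cons, ofComponents_cons _ (by simpa using hL),
        ← ih]
      simp [restrict, List.filter_map, Function.comp_def]

theorem map_ofComponents (g : ℕ × α → ℕ × α) (L : List (List (ℕ × α))) :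
    (ofComponents L).map (Option.map g) = ofComponents (L.map (List.map g)) := by
  induction L with
  | nil => rfl
  | cons c L ih =>
    rcases eq_or_ne L [] with rfl | hL
    · simp [ofComponents_singleton]
    · rw [ofComponents_cons c hL, List.map_cons, ofComponents_cons _ (by simpa using hL),
        ← ih]
      simp

theorem some_mem_ofComponents {x : ℕ × α} {L : List (List (ℕ × α))} :
    some x ∈ ofComponents L ↔ ∃ c ∈ L, x ∈ c := by
  induction L with
  | nil => simp [ofComponents_eq_intercalate]
  | cons c L ih =>
    rcases eq_or_ne L [] with rfl | hL
    · simp [ofComponents_singleton]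
    · simp [ofComponents_cons c hL, ih]

theorem mem_lettersOf {p : NPhrase α} {x : ℕ} : x ∈ lettersOf p ↔ ∃ c, some (x, c) ∈ p := by
  simp [lettersOf, occs]

theorem iso_iff_eq_map {p q : NPhrase α} :
    Iso p q ↔ ∃ σ : ℕ ≃ ℕ, p = q.map (Option.map fun xa => (σ xa.1, xa.2)) := by
  constructor <;> rintro ⟨σ, rfl⟩ <;> refine ⟨σ.symm, ?_⟩ <;>
    simp [List.map_map, Function.comp_def, Option.map_map]

theorem exists_equiv_apply_eq_and_apply_eq {β : Type*} [DecidableEq β] {a b x y : β}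
    (hab : a ≠ b) (hxy : x ≠ y) : ∃ σ : β ≃ β, σ a = x ∧ σ b = y := by
  set x' := Equiv.swap a x b
  have hx' : x ≠ x' := by
    simpa [x'] using (Equiv.swap a x).injective.ne hab
  refine ⟨(Equiv.swap a x).trans (Equiv.swap x' y), ?_, ?_⟩
  · simp [Equiv.swap_apply_of_ne_of_ne hx' hxy]
  · simp [x']

theorem exists_length_eq_comps (p : NPhrase α) :
    ∃ L : List (List (ℕ × α)), L.length = comps p ∧ ofComponents L = p := by
  induction p with
  | nil => exact ⟨[[]], rfl, rfl⟩
  | cons s p ih =>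
    obtain ⟨L, hlen, rfl⟩ := ih
    obtain _ | ⟨c, L⟩ := L
    · simp [comps] at hlen
    rcases s with _ | x
    · exact ⟨[] :: c :: L, by simp [comps] at hlen ⊢; omega, by simp [ofComponents_cons]⟩
    · exact ⟨(x :: c) :: L, by simp [comps] at hlen ⊢; omega,
        by simp [ofComponents_eq_intercalate]⟩

theorem exists_ofComponents_ofFn_eq (p : NPhrase α) :
    ∃ D : Fin (comps p) → List (ℕ × α), ofComponents (List.ofFn D) = p := by
  obtain ⟨L, hlen, hL⟩ := exists_length_eq_comps p
  exact hlen ▸ ⟨L.get, by rw [List.ofFn_get, hL]⟩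

variable {r : ℕ}

def restrictComps (D : Fin r → List (ℕ × α)) (T : Finset ℕ) (k : Fin r) : List (ℕ × α) :=
  (D k).filter fun xa => xa.1 ∈ T

theorem restrict_ofComponents_ofFn (D : Fin r → List (ℕ × α)) (T : Finset ℕ) :
    restrict (ofComponents (List.ofFn D)) T = ofComponents (List.ofFn (restrictComps D T)) := by
  rw [restrict_ofComponents, List.map_ofFn]
  rfl

theorem mem_lettersOf_ofComponents_ofFn {D : Fin r → List (ℕ × α)} {x : ℕ} :
    x ∈ lettersOf (ofComponents (List.ofFn D)) ↔ ∃ k c, (x, c) ∈ D k := by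
  simp only [mem_lettersOf, some_mem_ofComponents, List.mem_ofFn']
  aesop

theorem mem_of_mem_restrictComps {D : Fin r → List (ℕ × α)} {T : Finset ℕ} {k : Fin r}
    {e : ℕ × α} (h : e ∈ restrictComps D T k) : e.1 ∈ T := by
  simpa using (List.mem_filter.mp h).2

theorem subset_of_forall_mem_restrictComps {D : Fin r → List (ℕ × α)} {S T : Finset ℕ}
    (hT : T ⊆ lettersOf (ofComponents (List.ofFn D)))
    (h : ∀ k, ∀ e ∈ restrictComps D T k, e.1 ∈ S) : T ⊆ S := by
  intro z hz
  obtain ⟨k, c, hzk⟩ := mem_lettersOf_ofComponents_ofFn.mp (hT hz)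
  exact h k (z, c) (List.mem_filter.mpr ⟨hzk, by simpa using hz⟩)

theorem iso_ofComponents_ofFn_iff (hr : r ≠ 0) (D c : Fin r → List (ℕ × α)) :
    Iso (ofComponents (List.ofFn D)) (ofComponents (List.ofFn c)) ↔
      ∃ σ : ℕ ≃ ℕ, D = fun k => (c k).map fun xa => (σ xa.1, xa.2) := by
  have hne : ∀ d : Fin r → List (ℕ × α), List.ofFn d ≠ [] := by simp [hr]
  rw [iso_iff_eq_map]
  refine exists_congr fun σ => ?_
  rw [map_ofComponents, List.map_ofFn]
  exact ⟨fun h => List.ofFn_injective (ofComponents_injOn (hne _) (hne _) h),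
    fun h => h ▸ rfl⟩

section Patterns

variable (i j : Fin r)

theorem iso_gPat_iff (R : Fin r → List (ℕ × α)) (c : α) :
    Iso (ofComponents (List.ofFn R)) (gPat r i j c) ↔
      ∃ x, R = fun k => if k = i ∨ k = j then [(x, c)] else [] := by
  rw [gPat, iso_ofComponents_ofFn_iff i.pos.ne']
  constructor
  · rintro ⟨σ, rfl⟩
    exact ⟨σ 0, funext fun k => by split_ifs <;> rfl⟩
  · rintro ⟨x, rfl⟩
    exact ⟨Equiv.swap 0 x, funext fun k => by split_ifs <;> simp⟩

theorem iso_ePat_iff (R : Fin r → List (ℕ × α)) (la lb : α) :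
    Iso (ofComponents (List.ofFn R)) (ePat r i j la lb) ↔
      ∃ x y, x ≠ y ∧ R = fun k =>
        if k = i then [(x, la), (y, lb)] else if k = j then [(x, la), (y, lb)] else [] := by
  rw [ePat, iso_ofComponents_ofFn_iff i.pos.ne']
  constructor
  · rintro ⟨σ, rfl⟩
    exact ⟨σ 0, σ 1, σ.injective.ne zero_ne_one, funext fun k => by split_ifs <;> rfl⟩
  · rintro ⟨x, y, hxy, rfl⟩
    obtain ⟨σ, hσ0, hσ1⟩ := exists_equiv_apply_eq_and_apply_eq zero_ne_one hxy
    exact ⟨σ, funext fun k => by split_ifs <;> simp [hσ0, hσ1]⟩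

theorem iso_fPat_iff (R : Fin r → List (ℕ × α)) (la lb : α) :
    Iso (ofComponents (List.ofFn R)) (fPat r i j la lb) ↔
      ∃ x y, x ≠ y ∧ R = fun k =>
        if k = i then [(x, la), (y, lb)] else if k = j then [(y, lb), (x, la)] else [] := by
  rw [fPat, iso_ofComponents_ofFn_iff i.pos.ne']
  constructor
  · rintro ⟨σ, rfl⟩
    exact ⟨σ 0, σ 1, σ.injective.ne zero_ne_one, funext fun k => by split_ifs <;> rfl⟩
  · rintro ⟨x, y, hxy, rfl⟩
    obtain ⟨σ, hσ0, hσ1⟩ := exists_equiv_apply_eq_and_apply_eq zero_ne_one hxy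
    exact ⟨σ, funext fun k => by split_ifs <;> simp [hσ0, hσ1]⟩

end Patterns

section Linking

variable {D : Fin r → List (ℕ × α)} {i j : Fin r}

theorem restrictComps_restrictComps {S T : Finset ℕ} (hST : S ⊆ T) :
    restrictComps (restrictComps D T) S = restrictComps D S := by
  funext k
  simp only [restrictComps, List.filter_filter]
  exact List.filter_congr fun xa _ => by simpa using fun h => hST h

theorem restrictComps_pair_perm {x y : ℕ} (hxy : x ≠ y) (k : Fin r) :
    restrictComps D {x, y} k ~ restrictComps D {x} k ++ restrictComps D {y} k := by
  have h := List.filter_append_perm (fun xa : ℕ × α => decide (xa.1 ∈ ({x} : Finset ℕ)))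
    (restrictComps D {x, y} k)
  simp only [restrictComps, List.filter_filter] at h ⊢
  refine h.symm.trans (List.Perm.append (List.Perm.of_eq ?_) (List.Perm.of_eq ?_)) <;>
    exact List.filter_congr fun xa _ => by grind

def IsLinking (D : Fin r → List (ℕ × α)) (i j : Fin r) (x : ℕ) (c : α) : Prop :=
  restrictComps D {x} = fun k => if k = i ∨ k = j then [(x, c)] else []

noncomputable def linkingLetters (D : Fin r → List (ℕ × α)) (i j : Fin r) (c : α) :
    Finset ℕ :=
  (lettersOf (ofComponents (List.ofFn D))).filter fun x => IsLinking D i j x c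

noncomputable def orderedLinkingPairs (D : Fin r → List (ℕ × α)) (i j : Fin r) (la lb : α) :
    Finset (ℕ × ℕ) :=
  (linkingLetters D i j la ×ˢ linkingLetters D i j lb).filter fun q =>
    restrictComps D {q.1, q.2} i = [(q.1, la), (q.2, lb)]

theorem IsLinking.mem_lettersOf {x : ℕ} {c : α} (h : IsLinking D i j x c) :
    x ∈ lettersOf (ofComponents (List.ofFn D)) := by
  have hx : (x, c) ∈ restrictComps D {x} i := by rw [h]; simp
  exact mem_lettersOf_ofComponents_ofFn.mpr ⟨i, c, (List.mem_filter.mp hx).1⟩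

theorem IsLinking.label_eq {x : ℕ} {la lb : α} (ha : IsLinking D i j x la)
    (hb : IsLinking D i j x lb) : la = lb := by
  simpa using congrFun (ha.symm.trans hb) i

theorem IsLinking.ne_of_restrictComps_pair_eq {x y : ℕ} {la : α} {e₁ e₂ : ℕ × α}
    (hx : IsLinking D i j x la) (h : restrictComps D {x, y} i = [e₁, e₂]) : x ≠ y := by
  rintro rfl
  rw [Finset.pair_eq_singleton, hx] at h
  simp at h

theorem isLinking_and_isLinking_iff {x y : ℕ} {la lb : α} (hxy : x ≠ y) :
    IsLinking D i j x la ∧ IsLinking D i j y lb ↔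
      ∀ k, restrictComps D {x, y} k ~ if k = i ∨ k = j then [(x, la), (y, lb)] else [] := by
  constructor
  · rintro ⟨hx, hy⟩ k
    refine (restrictComps_pair_perm hxy k).trans ?_
    rw [hx, hy]
    by_cases hk : k = i ∨ k = j <;> simp [hk]
  · intro h
    have hfilter : ∀ z ∈ ({x, y} : Finset ℕ), ∀ k, restrictComps D {z} k ~
        (if k = i ∨ k = j then [(x, la), (y, lb)] else []).filter
          fun xa => xa.1 ∈ ({z} : Finset ℕ) := by
      intro z hz k
      rw [← restrictComps_restrictComps (Finset.singleton_subset_iff.mpr hz)]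
      exact (h k).filter _
    constructor <;> funext k
    · have := hfilter x (by simp) k
      split_ifs at this ⊢ <;> simpa [hxy.symm] using this
    · have := hfilter y (by simp) k
      split_ifs at this ⊢ <;> simpa [hxy] using this

theorem restrictComps_pair_eq_ite {x y : ℕ} {la lb : α} {w : List (ℕ × α)}
    (hperm : ∀ k, restrictComps D {x, y} k ~ if k = i ∨ k = j then [(x, la), (y, lb)] else [])
    (hi : restrictComps D {x, y} i = [(x, la), (y, lb)]) (hj : restrictComps D {x, y} j = w) :
    restrictComps D {x, y} = fun k =>
      if k = i then [(x, la), (y, lb)] else if k = j then w else [] := by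
  funext k
  split_ifs with hki hkj
  · exact hki ▸ hi
  · exact hkj ▸ hj
  · simpa [hki, hkj] using hperm k

theorem mem_orderedLinkingPairs_of_restrictComps_eq {T : Finset ℕ}
    (hT : T ⊆ lettersOf (ofComponents (List.ofFn D))) {x y : ℕ} {la lb : α} (hxy : x ≠ y)
    {w : List (ℕ × α)} (hw : w ~ [(x, la), (y, lb)])
    (hR : restrictComps D T = fun k =>
      if k = i then [(x, la), (y, lb)] else if k = j then w else []) :
    (x, y) ∈ orderedLinkingPairs D i j la lb ∧ {x, y} = T := by
  have hRi : restrictComps D T i = [(x, la), (y, lb)] := by simp [hR]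
  have hxyT : {x, y} = T := by
    refine subset_antisymm (Finset.insert_subset_iff.mpr ⟨?_, ?_⟩) ?_
    · exact mem_of_mem_restrictComps (D := D) (k := i) (e := (x, la)) (by simp [hRi])
    · exact Finset.singleton_subset_iff.mpr
        (mem_of_mem_restrictComps (D := D) (k := i) (e := (y, lb)) (by simp [hRi]))
    · refine subset_of_forall_mem_restrictComps hT fun k e he => ?_
      have hexy : e ∈ [(x, la), (y, lb)] := by
        simp only [hR] at he
        split_ifs at he
        · exact he
        · exact hw.mem_iff.mp he
        · simp at he
      rcases List.mem_pair.mp hexy with rfl | rfl <;> simp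
  subst hxyT
  have hperm : ∀ k, restrictComps D {x, y} k ~
      if k = i ∨ k = j then [(x, la), (y, lb)] else [] := by
    intro k
    rw [hR]
    by_cases hki : k = i
    · simp [hki]
    · by_cases hkj : k = j
      · subst hkj
        simpa [hki] using hw
      · simp [hki, hkj]
  obtain ⟨hx, hy⟩ := (isLinking_and_isLinking_iff hxy).mpr hperm
  refine ⟨Finset.mem_filter.mpr ⟨Finset.mem_product.mpr ⟨?_, ?_⟩, hRi⟩, rfl⟩
  · exact Finset.mem_filter.mpr ⟨hx.mem_lettersOf, hx⟩
  · exact Finset.mem_filter.mpr ⟨hy.mem_lettersOf, hy⟩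

theorem iso_ePat_or_iso_fPat_iff {T : Finset ℕ}
    (hT : T ⊆ lettersOf (ofComponents (List.ofFn D))) (la lb : α) :
    Iso (restrict (ofComponents (List.ofFn D)) T) (ePat r i j la lb) ∨
        Iso (restrict (ofComponents (List.ofFn D)) T) (fPat r i j la lb) ↔
      ∃ q ∈ orderedLinkingPairs D i j la lb, {q.1, q.2} = T := by
  simp only [restrict_ofComponents_ofFn, iso_ePat_iff, iso_fPat_iff]
  constructor
  · rintro (⟨x, y, hxy, hR⟩ | ⟨x, y, hxy, hR⟩)
    · exact ⟨(x, y), mem_orderedLinkingPairs_of_restrictComps_eq hT hxy (List.Perm.refl _) hR⟩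
    · exact ⟨(x, y), mem_orderedLinkingPairs_of_restrictComps_eq hT hxy (List.Perm.swap _ _ _) hR⟩
  · rintro ⟨⟨x, y⟩, hq, rfl⟩
    obtain ⟨hxy', hi⟩ := Finset.mem_filter.mp hq
    obtain ⟨hx, hy⟩ := Finset.mem_product.mp hxy'
    have hx := (Finset.mem_filter.mp hx).2
    have hy := (Finset.mem_filter.mp hy).2
    have hxy := hx.ne_of_restrictComps_pair_eq hi
    have hperm := (isLinking_and_isLinking_iff hxy).mp ⟨hx, hy⟩
    have hj := List.perm_pair.mp (by simpa using hperm j)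
    rcases hj with hj | hj
    · exact Or.inl ⟨x, y, hxy, restrictComps_pair_eq_ite hperm hi hj⟩
    · exact Or.inr ⟨x, y, hxy, restrictComps_pair_eq_ite hperm hi hj⟩

theorem not_iso_ePat_and_iso_fPat (hij : i ≠ j) (R : Fin r → List (ℕ × α)) (la lb : α) :
    ¬ (Iso (ofComponents (List.ofFn R)) (ePat r i j la lb) ∧
      Iso (ofComponents (List.ofFn R)) (fPat r i j la lb)) := by
  rintro ⟨he, hf⟩
  obtain ⟨x, y, hxy, rfl⟩ := (iso_ePat_iff i j R la lb).mp he
  obtain ⟨x', y', -, h⟩ := (iso_fPat_iff i j _ la lb).mp hf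
  have hi := congrFun h i
  have hj := congrFun h j
  simp only [if_pos, if_neg hij.symm] at hi hj
  simp only [List.cons.injEq, Prod.mk.injEq] at hi hj
  exact hxy (hj.1.1.trans (hi.2.1.1.symm))

theorem bracketN_ePat_add_bracketN_fPat (hij : i ≠ j) (la lb : α) :
    bracketN (ePat r i j la lb) (ofComponents (List.ofFn D)) +
        bracketN (fPat r i j la lb) (ofComponents (List.ofFn D)) =
      (orderedLinkingPairs D i j la lb).card := by
  have hinj : Set.InjOn (fun q : ℕ × ℕ => ({q.1, q.2} : Finset ℕ))
      (orderedLinkingPairs D i j la lb) := by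
    rintro ⟨x, y⟩ hq ⟨x', y'⟩ hq' hpair
    have h := (Finset.mem_filter.mp hq).2
    have h' := (Finset.mem_filter.mp hq').2
    simp only at hpair h h'
    rw [hpair, h'] at h
    simpa [eq_comm] using h
  have hdisj : ∀ T, ¬ (Iso (restrict (ofComponents (List.ofFn D)) T) (ePat r i j la lb) ∧
      Iso (restrict (ofComponents (List.ofFn D)) T) (fPat r i j la lb)) := fun T => by
    rw [restrict_ofComponents_ofFn]
    exact not_iso_ePat_and_iso_fPat hij _ la lb
  rw [bracketN, bracketN, ← Finset.card_union_of_disjoint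
      (Finset.disjoint_filter.mpr fun T _ he hf => hdisj T ⟨he, hf⟩),
    ← Finset.filter_or, ← Finset.card_image_of_injOn hinj]
  congr 1
  ext T
  simp only [Finset.mem_filter, Finset.mem_powerset, Finset.mem_image]
  constructor
  · rintro ⟨hT, h⟩
    exact (iso_ePat_or_iso_fPat_iff hT la lb).mp h
  · rintro ⟨q, hq, rfl⟩
    obtain ⟨hx, hy⟩ := Finset.mem_product.mp (Finset.mem_filter.mp hq).1
    have hT : {q.1, q.2} ⊆ lettersOf (ofComponents (List.ofFn D)) := by
      simp [Finset.insert_subset_iff, (Finset.mem_filter.mp hx).1, (Finset.mem_filter.mp hy).1]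
    exact ⟨hT, (iso_ePat_or_iso_fPat_iff hT la lb).mpr ⟨q, hq, rfl⟩⟩

theorem card_orderedLinkingPairs_add_card_orderedLinkingPairs (la lb : α) :
    (orderedLinkingPairs D i j la lb).card + (orderedLinkingPairs D i j lb la).card =
      ((linkingLetters D i j la ×ˢ linkingLetters D i j lb).filter fun q => q.1 ≠ q.2).card := by
  have hswap : (orderedLinkingPairs D i j lb la).card =
      ((linkingLetters D i j la ×ˢ linkingLetters D i j lb).filter fun q =>
        restrictComps D {q.1, q.2} i = [(q.2, lb), (q.1, la)]).card := by
    refine Finset.card_nbij' Prod.swap Prod.swap ?_ ?_ (fun _ _ => rfl) (fun _ _ => rfl) <;>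
      · intro q hq
        simpa [orderedLinkingPairs, Finset.pair_comm, and_comm] using hq
  rw [hswap, orderedLinkingPairs, ← Finset.card_union_of_disjoint, ← Finset.filter_or]
  · congr 1
    refine Finset.filter_congr fun ⟨x, y⟩ hq => ?_
    obtain ⟨hx, hy⟩ := Finset.mem_product.mp hq
    have hx := (Finset.mem_filter.mp hx).2
    have hy := (Finset.mem_filter.mp hy).2
    constructor
    · rintro (h | h)
      · exact hx.ne_of_restrictComps_pair_eq h
      · exact (hy.ne_of_restrictComps_pair_eq (Finset.pair_comm x y ▸ h)).symm
    · intro hxy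
      exact List.perm_pair.mp (by simpa using
        (isLinking_and_isLinking_iff hxy).mp ⟨hx, hy⟩ i)
  · refine Finset.disjoint_filter.mpr fun ⟨x, y⟩ hq h h' => ?_
    obtain ⟨hx, -⟩ := Finset.mem_product.mp hq
    refine (Finset.mem_filter.mp hx).2.ne_of_restrictComps_pair_eq h ?_
    simp only [h, List.cons.injEq, Prod.mk.injEq] at h'
    exact h'.1.1

theorem bracketN_gPat (c : α) :
    bracketN (gPat r i j c) (ofComponents (List.ofFn D)) = (linkingLetters D i j c).card := by
  rw [bracketN,
    ← Finset.card_image_of_injective (linkingLetters D i j c) Finset.singleton_injective]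
  congr 1
  ext T
  simp only [linkingLetters, Finset.mem_filter, Finset.mem_powerset, Finset.mem_image,
    restrict_ofComponents_ofFn, iso_gPat_iff]
  constructor
  · rintro ⟨hT, x, hR⟩
    have hTx : T = {x} := by
      refine subset_antisymm (subset_of_forall_mem_restrictComps hT fun k e he => ?_) ?_
      · simp only [hR] at he
        split_ifs at he <;> simp_all
      · exact Finset.singleton_subset_iff.mpr
          (mem_of_mem_restrictComps (D := D) (k := i) (e := (x, c)) (by simp [hR]))
    subst hTx
    exact ⟨x, ⟨hT (Finset.mem_singleton_self x), hR⟩, rfl⟩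
  · rintro ⟨x, ⟨hx, hlink⟩, rfl⟩
    exact ⟨Finset.singleton_subset_iff.mpr hx, x, hlink⟩

theorem two_mul_bracketN_ePat_add_bracketN_fPat_self (hij : i ≠ j) (c : α) :
    2 * (bracketN (ePat r i j c c) (ofComponents (List.ofFn D)) +
        bracketN (fPat r i j c c) (ofComponents (List.ofFn D))) =
      (linkingLetters D i j c).card * ((linkingLetters D i j c).card - 1) := by
  have hoff : ((linkingLetters D i j c ×ˢ linkingLetters D i j c).filter fun q => q.1 ≠ q.2) =
      (linkingLetters D i j c).offDiag := by
    ext q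
    simp [Finset.mem_offDiag, and_assoc]
  rw [bracketN_ePat_add_bracketN_fPat hij, two_mul,
    card_orderedLinkingPairs_add_card_orderedLinkingPairs, hoff, Finset.offDiag_card,
    Nat.mul_sub_one]

theorem bracketN_ePat_add_bracketN_fPat_swap (hij : i ≠ j) {la lb : α} (hab : la ≠ lb) :
    bracketN (ePat r i j la lb) (ofComponents (List.ofFn D)) +
        bracketN (fPat r i j la lb) (ofComponents (List.ofFn D)) +
        bracketN (ePat r i j lb la) (ofComponents (List.ofFn D)) +
        bracketN (fPat r i j lb la) (ofComponents (List.ofFn D)) =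
      (linkingLetters D i j la).card * (linkingLetters D i j lb).card := by
  rw [add_assoc _ (bracketN (ePat r i j lb la) _), bracketN_ePat_add_bracketN_fPat hij,
    bracketN_ePat_add_bracketN_fPat hij, card_orderedLinkingPairs_add_card_orderedLinkingPairs,
    Finset.filter_true_of_mem, Finset.card_product]
  rintro ⟨x, y⟩ hq (rfl : x = y)
  obtain ⟨hx, hy⟩ := Finset.mem_product.mp hq
  exact hab ((Finset.mem_filter.mp hx).2.label_eq (Finset.mem_filter.mp hy).2)

end Linking

theorem natCast_mul_natCast_sub_one (n : ℕ) : (n : ℤ) * ((n - 1 : ℕ) : ℤ) = n * (n - 1) := by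
  rcases n with _ | n <;> simp

end Nanophrase

open Nanophrase

theorem degree_two_formula_squares_linking_general {α : Type}
    (τ : α → α) (a b : α) (ha : a ≠ τ a) (hb : b = τ a)
    (r : ℕ) (i j : Fin r) (hij : i < j)
    (p : NPhrase α) (hpr : comps p = r) :
    (letI k := bracketN (gPat r i j a) p
     letI l := bracketN (gPat r i j b) p
     2 * (bracketN (ePat r i j a a) p + bracketN (fPat r i j a a) p) = k * (k - 1) ∧
     2 * (bracketN (ePat r i j b b) p + bracketN (fPat r i j b b) p) = l * (l - 1) ∧
     bracketN (ePat r i j a b) p + bracketN (fPat r i j a b) p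
       + bracketN (ePat r i j b a) p + bracketN (fPat r i j b a) p = k * l ∧
     (2 * bracketN (ePat r i j a a) p + 2 * bracketN (fPat r i j a a) p
       - 2 * bracketN (ePat r i j a b) p - 2 * bracketN (fPat r i j a b) p
       - 2 * bracketN (ePat r i j b a) p - 2 * bracketN (fPat r i j b a) p
       + 2 * bracketN (ePat r i j b b) p + 2 * bracketN (fPat r i j b b) p
       + (k : ℤ) + (l : ℤ)) = ((k : ℤ) - l) ^ 2) := by
  obtain ⟨D, rfl⟩ : ∃ D : Fin r → List (ℕ × α), ofComponents (List.ofFn D) = p :=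
    hpr ▸ exists_ofComponents_ofFn_eq p
  have hk := two_mul_bracketN_ePat_add_bracketN_fPat_self (D := D) hij.ne a
  have hl := two_mul_bracketN_ePat_add_bracketN_fPat_self (D := D) hij.ne b
  have hkl := bracketN_ePat_add_bracketN_fPat_swap (D := D) hij.ne (hb ▸ ha : a ≠ b)
  simp only [bracketN_gPat]
  refine ⟨hk, hl, hkl, ?_⟩
  have hk' := congrArg (Nat.cast : ℕ → ℤ) hk
  have hl' := congrArg (Nat.cast : ℕ → ℤ) hl
  have hkl' := congrArg (Nat.cast : ℕ → ℤ) hkl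
  push_cast [natCast_mul_natCast_sub_one] at hk' hl' hkl'
  linear_combination hk' + hl' - 2 * hkl'

/-- fix an involution τ and `a` with `a ≠ τ(a)`, `b = τ(a)`.  For an
`r`-component nanophrase `p` and components `i < j`, with `k = ⟨g_{i,j,a}, p⟩` and
`l = ⟨g_{i,j,b}, p⟩`, the stated counting identities hold, and consequently the
degree-2 angle bracket formula equals `(k − l)²`, the square of the `a`-component
of the linking number. -/
theorem degree_two_formula_squares_linking {α : Type}
    (τ : α → α) (hτ : Function.Involutive τ) (a b : α) (ha : a ≠ τ a) (hb : b = τ a)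
    (r : ℕ) (i j : Fin r) (hij : i < j)
    (p : NPhrase α) (hp : IsNano p) (hpr : comps p = r) :
    (letI k := bracketN (gPat r i j a) p
     letI l := bracketN (gPat r i j b) p
     2 * (bracketN (ePat r i j a a) p + bracketN (fPat r i j a a) p) = k * (k - 1) ∧
     2 * (bracketN (ePat r i j b b) p + bracketN (fPat r i j b b) p) = l * (l - 1) ∧
     bracketN (ePat r i j a b) p + bracketN (fPat r i j a b) p
       + bracketN (ePat r i j b a) p + bracketN (fPat r i j b a) p = k * l ∧
     (2 * bracketN (ePat r i j a a) p + 2 * bracketN (fPat r i j a a) p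
       - 2 * bracketN (ePat r i j a b) p - 2 * bracketN (fPat r i j a b) p
       - 2 * bracketN (ePat r i j b a) p - 2 * bracketN (fPat r i j b a) p
       + 2 * bracketN (ePat r i j b b) p + 2 * bracketN (fPat r i j b b) p
       + (k : ℤ) + (l : ℤ)) = ((k : ℤ) - l) ^ 2) :=
  degree_two_formula_squares_linking_general τ a b ha hb r i j hij p hpr
end
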